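/- Let ℓ² be the Hilbert space of square-summable complex sequences indexed by the integers k ≥ 1. Define the bounded operator H on ℓ² by (Hx)₁ = 0 and (Hx)_k = e^{−k} x_k for k ≥ 2, let a ∈ ℓ² be given by a₁ = 1, a_k = √(3/4ⁿ) if k = (4n)² for some integer n ≥ 1, and a_k = 0 otherwise, and let K_a x = ⟨x, a⟩ a. Then for every t ∈ (0, 1) there is exactly one λ < 0 that is an eigenvalue of H − tK_a; this λ satisfies t · ( 1/(−λ) + Σ_{k=2}^∞ a_k²/(e^{−k} − λ) ) = 1, and its eigenspace ker(H − tK_a − λ) is one-dimensional. -/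

import Mathlib

/-!
Write `H = diag(d_k)` with `d_k ≥ 0`. For `λ < 0` the operator `H - λ` is invertible, so
`(H - t K_a) y = λ y` forces `y = t ⟪y, a⟫ (H - λ)⁻¹ a`. Hence every eigenvector is a multiple of
`(H - λ)⁻¹ a`, and pairing with `a` (where `⟪y, a⟫ ≠ 0` since `y ≠ 0`) gives the secular equation
`t F(λ) = 1` with `F(λ) = ⟪(H - λ)⁻¹ a, a⟫ = ∑ a_k² / (d_k - λ)`; conversely every root yields the
eigenvector `(H - λ)⁻¹ a`. On `(-∞, 0)` the function `F` is continuous and strictly increasing,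
`F(λ) ≤ ‖a‖² / -λ`, and `F(λ) ≥ a₁² / -λ` because `d₁ = 0`; so `t F = 1` has exactly one root.
-/

open Filter Topology
open scoped InnerProductSpace Classical

noncomputable section

/-- The sequence `a`: `a₁ = 1`, `a_k = √(3/4ⁿ)` when `k = (4n)²` for some `n ≥ 1`,
and `a_k = 0` otherwise.  (When `k = (4n)²` one has `n = √k / 4`.) -/
def aSeq (k : ℕ+) : ℝ :=
  if (k : ℕ) = 1 then 1
  else if ∃ n : ℕ, 1 ≤ n ∧ (k : ℕ) = (4 * n) ^ 2 then
    Real.sqrt (3 / 4 ^ (Nat.sqrt (k : ℕ) / 4))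
  else 0

namespace RankOnePerturbation

variable {ι : Type*}

section Secular

variable (d a : ι → ℝ)

def secular (lam : ℝ) : ℝ := ∑' k, a k ^ 2 / (d k - lam)

variable {d a} (hd : ∀ k, 0 ≤ d k)
include hd

lemma diag_sub_pos {lam : ℝ} (hlam : lam < 0) (k : ι) : 0 < d k - lam := by
  linarith [hd k]

lemma sq_div_sub_le {lam : ℝ} (hlam : lam < 0) (k : ι) :
    a k ^ 2 / (d k - lam) ≤ a k ^ 2 / -lam :=
  div_le_div_of_nonneg_left (sq_nonneg _) (neg_pos.2 hlam) (by linarith [hd k])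

variable (ha : Summable fun k => a k ^ 2)
include ha

lemma summable_sq_div_sub {lam : ℝ} (hlam : lam < 0) :
    Summable fun k => a k ^ 2 / (d k - lam) :=
  (ha.div_const _).of_nonneg_of_le
    (fun k => div_nonneg (sq_nonneg _) (diag_sub_pos hd hlam k).le) (sq_div_sub_le hd hlam)

lemma secular_le {lam : ℝ} (hlam : lam < 0) :
    secular d a lam ≤ (∑' k, a k ^ 2) / -lam := by
  rw [secular, ← tsum_div_const]
  exact (summable_sq_div_sub hd ha hlam).tsum_le_tsum (sq_div_sub_le hd hlam) (ha.div_const _)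

lemma le_secular {lam : ℝ} (hlam : lam < 0) (i : ι) :
    a i ^ 2 / (d i - lam) ≤ secular d a lam :=
  (summable_sq_div_sub hd ha hlam).le_tsum i
    fun k _ => div_nonneg (sq_nonneg _) (diag_sub_pos hd hlam k).le

lemma secular_strictMonoOn {i : ι} (hai : a i ≠ 0) : StrictMonoOn (secular d a) (Set.Iio 0) := by
  intro x hx y hy hxy
  refine (summable_sq_div_sub hd ha hx).tsum_lt_tsum (i := i) (fun k => ?_) ?_
    (summable_sq_div_sub hd ha hy)
  · exact div_le_div_of_nonneg_left (sq_nonneg _) (diag_sub_pos hd hy k) (by linarith)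
  · exact div_lt_div_of_pos_left (by positivity) (diag_sub_pos hd hy i) (by linarith)

lemma secular_continuousOn_Iic {b : ℝ} (hb : b < 0) : ContinuousOn (secular d a) (Set.Iic b) := by
  have hunif : TendstoUniformlyOn (fun (s : Finset ι) lam => ∑ k ∈ s, a k ^ 2 / (d k - lam))
      (secular d a) atTop (Set.Iic b) := by
    refine tendstoUniformlyOn_tsum (ha.div_const (-b)) fun k lam hlam => ?_
    have hpos := diag_sub_pos hd (lt_of_le_of_lt hlam hb) k
    rw [Real.norm_of_nonneg (div_nonneg (sq_nonneg _) hpos.le)]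
    exact div_le_div_of_nonneg_left (sq_nonneg _) (neg_pos.2 hb) (by linarith [hd k, hlam.out])
  refine hunif.continuousOn (Eventually.of_forall fun s => ?_).frequently
  exact continuousOn_finsetSum s fun k _ => continuousOn_const.div
    (continuousOn_const.sub continuousOn_id) fun lam hlam =>
      (diag_sub_pos hd (lt_of_le_of_lt hlam hb) k).ne'

lemma exists_mul_secular_eq_one {i : ι} (hdi : d i = 0) (hai : a i ≠ 0) {t : ℝ} (ht : 0 < t) :
    ∃ lam < 0, t * secular d a lam = 1 := by
  set S := ∑' k, a k ^ 2
  have hai2 : 0 < a i ^ 2 := by positivity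
  have hSi : a i ^ 2 ≤ S := ha.le_tsum i fun k _ => sq_nonneg _
  have hb : -(t * a i ^ 2) < 0 := by nlinarith
  have hS : 0 < S := by linarith
  have ha0 : -(t * S) < 0 := by nlinarith
  have hlow : secular d a (-(t * S)) ≤ 1 / t := by
    calc secular d a (-(t * S)) ≤ S / -(-(t * S)) := secular_le hd ha ha0
      _ = 1 / t := by field_simp
  have hhigh : 1 / t ≤ secular d a (-(t * a i ^ 2)) := by
    calc 1 / t = a i ^ 2 / (d i - -(t * a i ^ 2)) := by rw [hdi, zero_sub, neg_neg]; field_simp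
      _ ≤ secular d a (-(t * a i ^ 2)) := le_secular hd ha hb i
  obtain ⟨lam, hlam, hroot⟩ := intermediate_value_Icc (by nlinarith : -(t * S) ≤ -(t * a i ^ 2))
    ((secular_continuousOn_Iic hd ha hb).mono Set.Icc_subset_Iic_self) ⟨hlow, hhigh⟩
  exact ⟨lam, lt_of_le_of_lt hlam.2 hb, by rw [hroot]; field_simp⟩

end Secular

section Operator

local notation "ℓ²[" J "]" => lp (fun _ : J => ℂ) 2

variable {d a : ι → ℝ} {av : ℓ²[ι]}

lemma summable_sq_of_coe (hav : ∀ k : ι, av k = a k) : Summable fun k => a k ^ 2 := by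
  have h := (memℓp_gen_iff (p := 2) (by norm_num)).1 (lp.memℓp av)
  simpa [hav, Real.rpow_two] using h

lemma memℓp_secularVector (hd : ∀ k, 0 ≤ d k) (ha : Summable fun k => a k ^ 2) {lam : ℝ}
    (hlam : lam < 0) : Memℓp (fun k => ((a k / (d k - lam) : ℝ) : ℂ)) 2 := by
  refine (memℓp_gen_iff (by norm_num)).2 <| (ha.div_const (lam ^ 2)).of_nonneg_of_le
    (fun k => by positivity) fun k => ?_
  have hpos := diag_sub_pos hd hlam k
  rw [ENNReal.toReal_ofNat, Real.rpow_two, Complex.norm_real, Real.norm_eq_abs, sq_abs, div_pow]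
  exact div_le_div_of_nonneg_left (sq_nonneg _) (by nlinarith)
    (by nlinarith [hd k] : lam ^ 2 ≤ (d k - lam) ^ 2)

/-- The candidate eigenvector `(H - lam)⁻¹ a`. -/
def secularVector (hd : ∀ k, 0 ≤ d k) (ha : Summable fun k => a k ^ 2) {lam : ℝ}
    (hlam : lam < 0) : ℓ²[ι] :=
  ⟨_, memℓp_secularVector hd ha hlam⟩

lemma secularVector_apply (hd : ∀ k, 0 ≤ d k) (ha : Summable fun k => a k ^ 2) {lam : ℝ}
    (hlam : lam < 0) (k : ι) : secularVector hd ha hlam k = ((a k / (d k - lam) : ℝ) : ℂ) :=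
  rfl

lemma secularVector_ne_zero (hd : ∀ k, 0 ≤ d k) (ha : Summable fun k => a k ^ 2) {lam : ℝ}
    (hlam : lam < 0) {i : ι} (hai : a i ≠ 0) : secularVector hd ha hlam ≠ 0 := by
  intro h
  have hi := congrArg (fun x : ℓ²[ι] => x i) h
  simp only [secularVector_apply, lp.coeFn_zero, Pi.zero_apply, Complex.ofReal_eq_zero,
    div_eq_zero_iff] at hi
  exact hi.elim hai (diag_sub_pos hd hlam i).ne'

lemma inner_eq_mul_secular (hav : ∀ k : ι, av k = a k) {y : ℓ²[ι]} {c : ℂ} {lam : ℝ}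
    (hy : ∀ k, y k = c * ((a k / (d k - lam) : ℝ) : ℂ)) : ⟪av, y⟫_ℂ = c * secular d a lam := by
  have hterm : ∀ k, ⟪av k, y k⟫_ℂ = c * ((a k ^ 2 / (d k - lam) : ℝ) : ℂ) := fun k => by
    rw [RCLike.inner_apply, hav, hy, Complex.conj_ofReal]
    push_cast
    ring
  rw [lp.inner_eq_tsum, tsum_congr hterm, tsum_mul_left, ← Complex.ofReal_tsum, secular]

variable {T : ℓ²[ι] →L[ℂ] ℓ²[ι]} {t : ℝ} (hav : ∀ k : ι, av k = a k)
  (hT : ∀ (x : ℓ²[ι]) (k : ι), T x k = d k * x k)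
include hav hT

lemma perturbation_apply (x : ℓ²[ι]) (k : ι) :
    (T - (t : ℂ) • (innerSL ℂ av).smulRight av) x k = d k * x k - t * ⟪av, x⟫_ℂ * a k := by
  simp only [sub_apply, smul_apply, ContinuousLinearMap.smulRight_apply, innerSL_apply_apply,
    lp.coeFn_sub, lp.coeFn_smul, Pi.sub_apply, Pi.smul_apply, smul_eq_mul, hT, hav]
  ring

lemma eigenvector_apply (hd : ∀ k, 0 ≤ d k) {lam : ℝ} (hlam : lam < 0) {y : ℓ²[ι]}
    (hy : (T - (t : ℂ) • (innerSL ℂ av).smulRight av) y = (lam : ℂ) • y) (k : ι) :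
    y k = t * ⟪av, y⟫_ℂ * ((a k / (d k - lam) : ℝ) : ℂ) := by
  have hk := congrArg (fun x : ℓ²[ι] => x k) hy
  simp only [perturbation_apply hav hT, lp.coeFn_smul, Pi.smul_apply, smul_eq_mul] at hk
  have hne : ((d k - lam : ℝ) : ℂ) ≠ 0 := by exact_mod_cast (diag_sub_pos hd hlam k).ne'
  rw [Complex.ofReal_div, mul_div_assoc', eq_div_iff hne]
  push_cast
  linear_combination hk

lemma mul_secular_eq_one_of_eigenvector (hd : ∀ k, 0 ≤ d k) {lam : ℝ} (hlam : lam < 0)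
    {y : ℓ²[ι]} (hy0 : y ≠ 0)
    (hy : (T - (t : ℂ) • (innerSL ℂ av).smulRight av) y = (lam : ℂ) • y) :
    t * secular d a lam = 1 := by
  have hyk := eigenvector_apply hav hT hd hlam hy
  have hc : ⟪av, y⟫_ℂ ≠ 0 := fun h0 => hy0 <| lp.ext <| funext fun k => by simpa [h0] using hyk k
  have hinner := inner_eq_mul_secular hav hyk
  have h1 : (t : ℂ) * secular d a lam = 1 :=
    mul_left_cancel₀ hc (by linear_combination -hinner)
  exact_mod_cast h1

lemma perturbation_secularVector (hd : ∀ k, 0 ≤ d k) (ha : Summable fun k => a k ^ 2) {lam : ℝ}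
    (hlam : lam < 0) (hroot : t * secular d a lam = 1) :
    (T - (t : ℂ) • (innerSL ℂ av).smulRight av) (secularVector hd ha hlam) =
      (lam : ℂ) • secularVector hd ha hlam := by
  have hinner := inner_eq_mul_secular hav (y := secularVector hd ha hlam) (c := 1)
    fun k => (one_mul _).symm
  have hroot' : (t : ℂ) * secular d a lam = 1 := by exact_mod_cast hroot
  refine lp.ext <| funext fun k => ?_
  have hne : (d k : ℂ) - lam ≠ 0 := by exact_mod_cast (diag_sub_pos hd hlam k).ne'
  simp only [perturbation_apply hav hT, lp.coeFn_smul, Pi.smul_apply, smul_eq_mul,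
    secularVector_apply, hinner, one_mul]
  push_cast
  field_simp
  linear_combination (a k : ℂ) * (lam - d k) * hroot'

lemma ker_eq_span_secularVector (hd : ∀ k, 0 ≤ d k) (ha : Summable fun k => a k ^ 2) {lam : ℝ}
    (hlam : lam < 0) (hroot : t * secular d a lam = 1) :
    LinearMap.ker ((T - (t : ℂ) • (innerSL ℂ av).smulRight av -
        (lam : ℂ) • (1 : ℓ²[ι] →L[ℂ] ℓ²[ι]) : ℓ²[ι] →L[ℂ] ℓ²[ι]) : ℓ²[ι] →ₗ[ℂ] ℓ²[ι]) =
      Submodule.span ℂ {secularVector hd ha hlam} := by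
  ext y
  rw [LinearMap.mem_ker, Submodule.mem_span_singleton, ContinuousLinearMap.coe_coe, sub_apply,
    smul_apply, one_apply_eq_self, sub_eq_zero]
  constructor
  · intro hy
    exact ⟨t * ⟪av, y⟫_ℂ, lp.ext <| funext fun k => (eigenvector_apply hav hT hd hlam hy k).symm⟩
  · rintro ⟨c, rfl⟩
    rw [map_smul, perturbation_secularVector hav hT hd ha hlam hroot, smul_comm]

end Operator

end RankOnePerturbation

open RankOnePerturbation

def diagonalH (k : ℕ+) : ℝ := if (k : ℕ) = 1 then 0 else Real.exp (-((k : ℕ) : ℝ))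

lemma diagonalH_nonneg (k : ℕ+) : 0 ≤ diagonalH k := by
  unfold diagonalH
  split_ifs
  exacts [le_rfl, (Real.exp_pos _).le]

lemma diagonalH_one : diagonalH 1 = 0 := if_pos rfl

lemma aSeq_one : aSeq 1 = 1 := if_pos rfl

lemma secular_diagonalH_aSeq (ha : Summable fun k => aSeq k ^ 2) {lam : ℝ} (hlam : lam < 0) :
    secular diagonalH aSeq lam = 1 / (-lam) + ∑' k : ℕ+, (if (k : ℕ) = 1 then 0
      else aSeq k ^ 2 / (Real.exp (-((k : ℕ) : ℝ)) - lam)) := by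
  rw [secular, (summable_sq_div_sub diagonalH_nonneg ha hlam).tsum_eq_add_tsum_ite 1, aSeq_one,
    diagonalH_one, one_pow, zero_sub]
  congr 1
  refine tsum_congr fun k => ?_
  simp only [← PNat.coe_eq_one_iff, diagonalH]
  split_ifs <;> rfl

/-- for every `0 < t < 1` the operator `H - t K_a` on `ℓ²` (where `H` is the
diagonal operator `(Hx)₁ = 0`, `(Hx)_k = e^{-k} x_k` for `k ≥ 2`, `a` is the vector with
coordinates `aSeq`, and `K_a x = ⟨x, a⟩ a`) has exactly one negative eigenvalue `λ`; this `λ`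
satisfies `t (1/(-λ) + Σ_{k≥2} a_k²/(e^{-k} - λ)) = 1` and its eigenspace is
one-dimensional. -/
theorem unique_negative_eigenvalue
    (av : lp (fun _ : ℕ+ => ℂ) 2) (hav : ∀ k : ℕ+, av k = (aSeq k : ℂ))
    (T : lp (fun _ : ℕ+ => ℂ) 2 →L[ℂ] lp (fun _ : ℕ+ => ℂ) 2)
    (hT : ∀ (x : lp (fun _ : ℕ+ => ℂ) 2) (k : ℕ+),
      T x k = if (k : ℕ) = 1 then 0 else (Real.exp (-((k : ℕ) : ℝ)) : ℂ) * x k) :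
    ∀ t ∈ Set.Ioo (0 : ℝ) 1,
      ∃ lam : ℝ, lam < 0 ∧
        (∃ x, x ≠ 0 ∧
          (T - (t : ℂ) • (innerSL ℂ av).smulRight av) x = (lam : ℂ) • x) ∧
        (∀ lam' : ℝ, lam' < 0 →
          (∃ x, x ≠ 0 ∧
            (T - (t : ℂ) • (innerSL ℂ av).smulRight av) x = (lam' : ℂ) • x) →
          lam' = lam) ∧
        t * (1 / (-lam) +
            ∑' k : ℕ+, (if (k : ℕ) = 1 then 0
              else aSeq k ^ 2 / (Real.exp (-((k : ℕ) : ℝ)) - lam))) = 1 ∧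
        Module.finrank ℂ
          (LinearMap.ker ((T - (t : ℂ) • (innerSL ℂ av).smulRight av -
            (lam : ℂ) • (1 : lp (fun _ : ℕ+ => ℂ) 2 →L[ℂ] lp (fun _ : ℕ+ => ℂ) 2) :
              lp (fun _ : ℕ+ => ℂ) 2 →L[ℂ] lp (fun _ : ℕ+ => ℂ) 2) :
              lp (fun _ : ℕ+ => ℂ) 2 →ₗ[ℂ] lp (fun _ : ℕ+ => ℂ) 2)) = 1 := by
  rintro t ⟨ht, -⟩
  have hT' (x : lp (fun _ : ℕ+ => ℂ) 2) (k : ℕ+) : T x k = diagonalH k * x k := by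
    rw [hT, diagonalH]
    split_ifs <;> simp
  have hd := diagonalH_nonneg
  have ha := summable_sq_of_coe hav
  have hai : aSeq 1 ≠ 0 := by rw [aSeq_one]; exact one_ne_zero
  obtain ⟨lam, hlam, hroot⟩ := exists_mul_secular_eq_one hd ha diagonalH_one hai ht
  have hv := secularVector_ne_zero hd ha hlam hai
  refine ⟨lam, hlam, ⟨_, hv, perturbation_secularVector hav hT' hd ha hlam hroot⟩, ?_, ?_, ?_⟩
  · rintro lam' hlam' ⟨y, hy0, hy⟩
    refine (secular_strictMonoOn hd ha hai).injOn hlam' hlam (mul_left_cancel₀ ht.ne' ?_)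
    rw [mul_secular_eq_one_of_eigenvector hav hT' hd hlam' hy0 hy, hroot]
  · rwa [← secular_diagonalH_aSeq ha hlam]
  · rw [ker_eq_span_secularVector hav hT' hd ha hlam hroot]
    exact finrank_span_singleton hv
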